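/- arXiv:1804.06186 — 2 statements merged into one kernel-verified Lean document; each statement's English description precedes it below -/
import Mathlib

section
/- Fix d ∈ {1,...,9}. For each n ≥ 1 define P(d,n) = (1/n)·Σ_{i=1}^{n} c_d(i)/i, where c_d(i) is the number of integers in {1,...,i} with decimal leading digit d. Then the subsequence n ↦ P(d, d·10^n − 1) converges to α_d = (9 + 10·ln 10 + 9(d+1)·ln(1 − 1/(d+1)))/(81d). -/
open Finset

/-- The leading (first) decimal digit of a positive integer. -/
def leadingDigit (n : ℕ) : ℕ := n / 10 ^ (Nat.log 10 n)

/-- The number of integers in {1,...,i} whose decimal leading digit equals d. -/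
def ldCount (d i : ℕ) : ℕ := ((Finset.Icc 1 i).filter (fun j => leadingDigit j = d)).card

/-- Probability that the leading digit is d when i is uniform on {1,...,n} and j uniform on {1,...,i}. -/
noncomputable def P (d n : ℕ) : ℝ := (1 / (n : ℝ)) * ∑ i ∈ Finset.Icc 1 n, (ldCount d i : ℝ) / i

open Filter Real Topology

/-!
Exchanging the two sums, `P d N = N⁻¹ ∑ (1/j + ⋯ + 1/N)` over the `j ≤ N` with leading digit `d`,
and each harmonic tail lies between `log (N / j)` and `log (N / j) + 1 / j`; the second error sums
to at most `1 + log N`, so `P d N` is asymptotic to the mean of `log (N / j)` over these `j`.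
For `N = d 10ⁿ - 1` these `j` fill the blocks `[d 10ᵏ, (d + 1) 10ᵏ)`, `k < n`. Comparing the sum
of `log j` over a block with the integral of `log` (an error of at most `log (1 + 1 / d)`) gives
`10ᵏ (∫ x in d..d+1, log x + k log 10)`, and the sums `∑ 10ᵏ`, `∑ (n - k) 10ᵏ` are geometric.
-/

lemma sum_ldCount_div_eq (d N : ℕ) :
    ∑ i ∈ Icc 1 N, (ldCount d i : ℝ) / i
      = ∑ j ∈ Icc 1 N with leadingDigit j = d, ∑ i ∈ Icc j N, (i : ℝ)⁻¹ := by
  have hcount (i : ℕ) :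
      (ldCount d i : ℝ) / i = ∑ _j ∈ Icc 1 i with leadingDigit _j = d, (i : ℝ)⁻¹ := by
    rw [sum_const, nsmul_eq_mul, ldCount, div_eq_mul_inv]
  simp_rw [hcount]
  refine sum_comm' fun i j => ?_
  simp only [mem_filter, mem_Icc]
  omega

lemma log_sub_log_le_sum_Icc_inv {j N : ℕ} (hj : 0 < j) (hjN : j ≤ N) :
    log N - log j ≤ ∑ i ∈ Icc j N, (i : ℝ)⁻¹ := by
  have hj' : (0 : ℝ) < j := by exact_mod_cast hj
  calc log N - log j ≤ log ↑(N + 1) - log j := by gcongr <;> simp; omega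
    _ = ∫ x in (j : ℝ)..↑(N + 1), x⁻¹ := by
      rw [integral_inv_of_pos hj' (by positivity), log_div (by positivity) hj'.ne']
    _ ≤ ∑ i ∈ Ico j (N + 1), (i : ℝ)⁻¹ :=
      (inv_antitoneOn_Icc_right hj').integral_le_sum_Ico (by omega)
    _ = ∑ i ∈ Icc j N, (i : ℝ)⁻¹ := by rw [Ico_add_one_right_eq_Icc]

lemma sum_Icc_inv_le {j N : ℕ} (hj : 0 < j) (hjN : j ≤ N) :
    ∑ i ∈ Icc j N, (i : ℝ)⁻¹ ≤ log N - log j + (j : ℝ)⁻¹ := by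
  have hj' : (0 : ℝ) < j := by exact_mod_cast hj
  calc ∑ i ∈ Icc j N, (i : ℝ)⁻¹ = ∑ i ∈ Ico j N, ((i + 1 : ℕ) : ℝ)⁻¹ + (j : ℝ)⁻¹ := by
        rw [← Ico_add_one_right_eq_Icc, sum_eq_sum_Ico_succ_bot (by omega), add_comm,
          sum_Ico_add' (fun i : ℕ => (i : ℝ)⁻¹)]
    _ ≤ (∫ x in (j : ℝ)..N, x⁻¹) + (j : ℝ)⁻¹ := by
      gcongr
      exact (inv_antitoneOn_Icc_right hj').sum_le_integral_Ico hjN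
    _ = log N - log j + (j : ℝ)⁻¹ := by
      rw [integral_inv_of_pos hj' (by simp; omega), log_div (by simp; omega) hj'.ne']

noncomputable def meanLogRatio (d N : ℕ) : ℝ :=
  (N : ℝ)⁻¹ * ∑ j ∈ Icc 1 N with leadingDigit j = d, (log N - log j)

lemma P_sub_meanLogRatio_mem_Icc (d N : ℕ) :
    P d N - meanLogRatio d N ∈ Set.Icc 0 ((1 + log N) / N) := by
  have hP : P d N - meanLogRatio d N = (N : ℝ)⁻¹ * ∑ j ∈ Icc 1 N with leadingDigit j = d,
      (∑ i ∈ Icc j N, (i : ℝ)⁻¹ - (log N - log j)) := by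
    rw [P, meanLogRatio, sum_ldCount_div_eq, one_div, ← mul_sub, ← sum_sub_distrib]
  have htail {j : ℕ} (hj : j ∈ Icc 1 N) :
      ∑ i ∈ Icc j N, (i : ℝ)⁻¹ - (log N - log j) ∈ Set.Icc 0 (j : ℝ)⁻¹ := by
    rw [mem_Icc] at hj
    constructor
    · linarith [log_sub_log_le_sum_Icc_inv hj.1 hj.2]
    · linarith [sum_Icc_inv_le hj.1 hj.2]
  rw [hP, div_eq_inv_mul]
  refine ⟨mul_nonneg (by positivity) (sum_nonneg fun j hj => (htail (mem_filter.mp hj).1).1), ?_⟩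
  gcongr
  calc _ ≤ ∑ j ∈ Icc 1 N with leadingDigit j = d, (j : ℝ)⁻¹ :=
        sum_le_sum fun j hj => (htail (mem_filter.mp hj).1).2
    _ ≤ ∑ j ∈ Icc 1 N, (j : ℝ)⁻¹ := sum_le_sum_of_subset_of_nonneg (filter_subset _ _) (by simp)
    _ ≤ 1 + log N := by simpa [harmonic_eq_sum_Icc] using harmonic_le_one_add_log N

lemma tendsto_P_sub_meanLogRatio (d : ℕ) :
    Tendsto (fun N => P d N - meanLogRatio d N) atTop (𝓝 0) := by
  have hlog : Tendsto (fun N : ℕ => (1 + log N) / N) atTop (𝓝 0) := by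
    have h := tendsto_one_div_atTop_nhds_zero_nat.add
      ((tendsto_pow_log_div_mul_add_atTop 1 0 1 one_ne_zero).comp tendsto_natCast_atTop_atTop)
    simpa [add_div] using h
  exact squeeze_zero (fun N => (P_sub_meanLogRatio_mem_Icc d N).1)
    (fun N => (P_sub_meanLogRatio_mem_Icc d N).2) hlog

lemma leadingDigit_eq_and_log_eq_iff {d k j : ℕ} (hd1 : 1 ≤ d) (hd9 : d ≤ 9) :
    leadingDigit j = d ∧ Nat.log 10 j = k ↔ j ∈ Ico (d * 10 ^ k) ((d + 1) * 10 ^ k) := by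
  have hpow : 0 < 10 ^ k := by positivity
  rw [mem_Ico, leadingDigit]
  constructor
  · rintro ⟨hdiv, rfl⟩
    rw [← hdiv]
    exact ⟨Nat.div_mul_le_self _ _, Nat.lt_mul_of_div_lt (by omega) hpow⟩
  · rintro ⟨hlo, hhi⟩
    have hlog : Nat.log 10 j = k := by
      refine Nat.log_eq_of_pow_le_of_lt_pow (le_trans ?_ hlo) (lt_of_lt_of_le hhi ?_)
      · exact Nat.le_mul_of_pos_left _ hd1
      · rw [pow_succ, mul_comm]; exact Nat.mul_le_mul_left _ (by omega)
    exact ⟨by rw [hlog]; exact Nat.div_eq_of_lt_le hlo hhi, hlog⟩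

lemma sum_leadingDigit_eq_sum_blocks {M : Type*} [AddCommMonoid M] {d : ℕ} (hd1 : 1 ≤ d)
    (hd9 : d ≤ 9) (n : ℕ) (f : ℕ → M) :
    ∑ j ∈ Icc 1 (d * 10 ^ n - 1) with leadingDigit j = d, f j
      = ∑ k ∈ range n, ∑ j ∈ Ico (d * 10 ^ k) ((d + 1) * 10 ^ k), f j := by
  have hmem {k j : ℕ} (hk : k < n) (hj : j ∈ Ico (d * 10 ^ k) ((d + 1) * 10 ^ k)) :
      j ∈ Icc 1 (d * 10 ^ n - 1) := by
    have h1 : 1 ≤ d * 10 ^ k := Nat.one_le_iff_ne_zero.mpr (by positivity)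
    have h2 : (d + 1) * 10 ^ k ≤ d * 10 ^ n :=
      calc (d + 1) * 10 ^ k ≤ d * 10 * 10 ^ k := Nat.mul_le_mul_right _ (by omega)
        _ = d * 10 ^ (k + 1) := by ring
        _ ≤ d * 10 ^ n := Nat.mul_le_mul_left _ (Nat.pow_le_pow_right (by norm_num) hk)
    rw [mem_Ico] at hj
    rw [mem_Icc]
    omega
  rw [← sum_fiberwise_of_maps_to (g := Nat.log 10) (t := range n)]
  · refine sum_congr rfl fun k hk => sum_congr ?_ fun _ _ => rfl
    ext j
    rw [filter_filter, mem_filter, leadingDigit_eq_and_log_eq_iff hd1 hd9]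
    exact ⟨And.right, fun hj => ⟨hmem (mem_range.mp hk) hj, hj⟩⟩
  · intro j hj
    rw [mem_filter, mem_Icc] at hj
    have hlo := (mem_Ico.mp ((leadingDigit_eq_and_log_eq_iff hd1 hd9).mp ⟨hj.2, rfl⟩)).1
    rw [mem_range, ← Nat.pow_lt_pow_iff_right (by norm_num : 1 < 10)]
    refine (Nat.mul_lt_mul_left (by omega : 0 < d)).mp ?_
    omega

noncomputable def logSumDefect (a b : ℕ) : ℝ := (∫ x in (a : ℝ)..b, log x) - ∑ j ∈ Ico a b, log j

lemma monotoneOn_log_Icc {a b : ℝ} (ha : 0 < a) : MonotoneOn log (Set.Icc a b) :=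
  strictMonoOn_log.monotoneOn.mono fun _ hx => ha.trans_le hx.1

lemma logSumDefect_nonneg {a b : ℕ} (ha : 0 < a) (hab : a ≤ b) : 0 ≤ logSumDefect a b :=
  sub_nonneg.mpr <| (monotoneOn_log_Icc (by exact_mod_cast ha)).sum_le_integral_Ico hab

lemma logSumDefect_le {a b : ℕ} (ha : 0 < a) (hab : a ≤ b) :
    logSumDefect a b ≤ log b - log a := by
  have hcmp := (monotoneOn_log_Icc (b := b) (by exact_mod_cast ha)).integral_le_sum_Ico hab
  have htel := sum_Ico_sub (fun j : ℕ => log j) hab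
  rw [sum_sub_distrib] at htel
  push_cast at hcmp htel
  rw [logSumDefect]
  linarith

lemma integral_log_scale {c t : ℝ} (hc : 0 < c) (ht : 0 < t) :
    ∫ x in c * t..(c + 1) * t, log x = t * ((∫ x in c..c + 1, log x) + log t) := by
  simp only [integral_log]
  rw [log_mul hc.ne' ht.ne', log_mul (by positivity) ht.ne']
  ring

lemma sum_range_pow_ten (n : ℕ) : ∑ k ∈ range n, (10 : ℝ) ^ k = (10 ^ n - 1) / 9 := by
  rw [geom_sum_eq (by norm_num)]
  norm_num

lemma sum_range_sub_mul_pow_ten (n : ℕ) :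
    ∑ k ∈ range n, ((n : ℝ) - k) * 10 ^ k = (10 ^ (n + 1) - 10 - 9 * n) / 81 := by
  induction n with
  | zero => norm_num
  | succ n ih =>
    have hshift : ∑ k ∈ range n, (((n + 1 : ℕ) : ℝ) - (k + 1 : ℕ)) * 10 ^ (k + 1)
        = 10 * ∑ k ∈ range n, ((n : ℝ) - k) * 10 ^ k := by
      rw [mul_sum]
      refine sum_congr rfl fun k _ => ?_
      push_cast
      ring
    rw [sum_range_succ', hshift, ih]
    push_cast
    ring

lemma meanLogRatio_eq {d : ℕ} (hd1 : 1 ≤ d) (hd9 : d ≤ 9) (n : ℕ) :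
    meanLogRatio d (d * 10 ^ n - 1) = ((d * 10 ^ n - 1 : ℕ) : ℝ)⁻¹ *
      ((log ((d * 10 ^ n - 1 : ℕ) : ℝ) - n * log 10 - ∫ x in (d : ℝ)..d + 1, log x)
          * (10 ^ n - 1) / 9
        + log 10 * (10 ^ (n + 1) - 10 - 9 * n) / 81
        + ∑ k ∈ range n, logSumDefect (d * 10 ^ k) ((d + 1) * 10 ^ k)) := by
  set N := d * 10 ^ n - 1
  set I := ∫ x in (d : ℝ)..d + 1, log x
  have hblock (k : ℕ) : ∑ j ∈ Ico (d * 10 ^ k) ((d + 1) * 10 ^ k), (log N - log j)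
      = 10 ^ k * (log N - I - k * log 10) + logSumDefect (d * 10 ^ k) ((d + 1) * 10 ^ k) := by
    have hcard : (d + 1) * 10 ^ k - d * 10 ^ k = 10 ^ k := by
      rw [add_mul, one_mul, Nat.add_sub_cancel_left]
    rw [sum_sub_distrib, sum_const, Nat.card_Ico, hcard, logSumDefect]
    push_cast
    rw [integral_log_scale (by exact_mod_cast hd1) (by positivity), log_pow]
    simp only [nsmul_eq_mul]
    push_cast
    ring
  rw [meanLogRatio, sum_leadingDigit_eq_sum_blocks hd1 hd9, sum_congr rfl fun k _ => hblock k,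
    sum_add_distrib]
  congr 1
  have hsplit (k : ℕ) : (10 : ℝ) ^ k * (log N - I - k * log 10)
      = (log N - n * log 10 - I) * 10 ^ k + log 10 * (((n : ℝ) - k) * 10 ^ k) := by ring
  rw [sum_congr rfl fun k _ => hsplit k, sum_add_distrib, ← mul_sum, ← mul_sum,
    sum_range_pow_ten, sum_range_sub_mul_pow_ten]
  ring

lemma logSumDefect_block_mem {d : ℕ} (hd : 0 < d) (k : ℕ) :
    logSumDefect (d * 10 ^ k) ((d + 1) * 10 ^ k) ∈ Set.Icc 0 (log (d + 1) - log d) := by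
  have ha : 0 < d * 10 ^ k := by positivity
  have hab : d * 10 ^ k ≤ (d + 1) * 10 ^ k := Nat.mul_le_mul_right _ (Nat.le_succ d)
  refine ⟨logSumDefect_nonneg ha hab, (logSumDefect_le ha hab).trans_eq ?_⟩
  push_cast
  rw [log_mul (by positivity) (by positivity), log_mul (by positivity) (by positivity)]
  ring

lemma tendsto_pow_ten_inv_mul_sum_logSumDefect {d : ℕ} (hd : 0 < d) :
    Tendsto (fun n => ((10 : ℝ) ^ n)⁻¹ *
      ∑ k ∈ range n, logSumDefect (d * 10 ^ k) ((d + 1) * 10 ^ k)) atTop (𝓝 0) := by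
  have hv : Tendsto (fun n : ℕ => (n : ℝ) * ((10 : ℝ) ^ n)⁻¹ * (log (d + 1) - log d)) atTop
      (𝓝 0) := by
    simpa using (tendsto_self_mul_const_pow_of_lt_one (r := (10 : ℝ)⁻¹) (by norm_num)
      (by norm_num)).mul_const (log (d + 1) - log d)
  refine squeeze_zero (fun n => mul_nonneg (by positivity)
    (sum_nonneg fun k _ => (logSumDefect_block_mem hd k).1)) (fun n => ?_) hv
  calc _ ≤ ((10 : ℝ) ^ n)⁻¹ * ∑ _k ∈ range n, (log (d + 1) - log d) := by
        gcongr with k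
        exact (logSumDefect_block_mem hd k).2
    _ = _ := by rw [sum_const, card_range, nsmul_eq_mul]; ring

lemma tendsto_meanLogRatio {d : ℕ} (hd1 : 1 ≤ d) (hd9 : d ≤ 9) :
    Tendsto (fun n => meanLogRatio d (d * 10 ^ n - 1)) atTop
      (𝓝 (((log d - ∫ x in (d : ℝ)..d + 1, log x) / 9 + 10 * log 10 / 81) / d)) := by
  set I := ∫ x in (d : ℝ)..d + 1, log x
  set E := fun n => ∑ k ∈ range n, logSumDefect (d * 10 ^ k) ((d + 1) * 10 ^ k)
  set u : ℕ → ℝ := fun n => ((10 : ℝ) ^ n)⁻¹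
  have hd0 : (d : ℝ) ≠ 0 := by positivity
  have hu : Tendsto u atTop (𝓝 0) :=
    tendsto_inv_atTop_zero.comp (tendsto_pow_atTop_atTop_of_one_lt (by norm_num))
  have hv : Tendsto (fun n => n * u n) atTop (𝓝 0) := by
    simpa [u, inv_pow] using tendsto_self_mul_const_pow_of_lt_one (r := (10 : ℝ)⁻¹)
      (by norm_num) (by norm_num)
  have hdu : Tendsto (fun n => (d : ℝ) - u n) atTop (𝓝 d) := by
    simpa using tendsto_const_nhds.sub hu
  -- in terms of `u = 10⁻ⁿ`, `meanLogRatio` is continuous in `u`, `n u` and `u E`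
  have hlim : Tendsto (fun n => ((log (d - u n) - I) * (1 - u n) / 9
      + log 10 * (10 - 10 * u n - 9 * (n * u n)) / 81 + u n * E n) / (d - u n)) atTop
      (𝓝 (((log d - I) / 9 + 10 * log 10 / 81) / d)) := by
    have := (((((hdu.log hd0).sub_const I).mul
      ((tendsto_const_nhds (x := 1)).sub hu)).div_const 9).add
      ((((tendsto_const_nhds (x := 10)).sub (hu.const_mul 10)).sub (hv.const_mul 9)).const_mul
        (log 10) |>.div_const 81) |>.add (tendsto_pow_ten_inv_mul_sum_logSumDefect hd1)).div
      hdu hd0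
    convert this using 2
    · rfl
    · ring
  refine hlim.congr' ?_
  filter_upwards [eventually_ge_atTop 1] with n hn
  have hdu_pos : 0 < (d : ℝ) - u n := by
    have : u n ≤ 10⁻¹ := inv_anti₀ (by norm_num) (le_self_pow₀ (by norm_num) (by omega))
    have : (1 : ℝ) ≤ d := by exact_mod_cast hd1
    linarith
  have hN : ((d * 10 ^ n - 1 : ℕ) : ℝ) = 10 ^ n * (d - u n) := by
    rw [Nat.cast_sub (Nat.one_le_iff_ne_zero.mpr (by positivity))]
    push_cast
    simp only [u]
    field_simp
  rw [meanLogRatio_eq hd1 hd9, hN, log_mul (by positivity) hdu_pos.ne', log_pow]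
  simp only [u, E, I]
  field_simp
  ring

theorem tendsto_P_phi (d : ℕ) (hd : d ∈ Finset.Icc 1 9) :
    Filter.Tendsto (fun n : ℕ => P d (d * 10 ^ n - 1)) Filter.atTop
      (nhds ((9 + 10 * Real.log 10 + 9 * ((d : ℝ) + 1) * Real.log (1 - 1 / ((d : ℝ) + 1))) /
        (81 * d))) := by
  obtain ⟨hd1, hd9⟩ := Finset.mem_Icc.mp hd
  have hN : Tendsto (fun n => d * 10 ^ n - 1) atTop atTop :=
    (tendsto_sub_atTop_nat 1).comp <| tendsto_atTop_mono (fun n => Nat.le_mul_of_pos_left _ hd1)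
      (tendsto_pow_atTop_atTop_of_one_lt (by norm_num : 1 < 10))
  have hP := ((tendsto_P_sub_meanLogRatio d).comp hN).add (tendsto_meanLogRatio hd1 hd9)
  simp only [Function.comp_def, sub_add_cancel, zero_add] at hP
  convert hP using 2
  have hd0 : (0 : ℝ) < d := by exact_mod_cast hd1
  rw [integral_log, one_sub_div (by positivity), add_sub_cancel_right,
    log_div hd0.ne' (by positivity)]
  field_simp
  ring
end

section
/- For all n ≥ 1 and all p, q ∈ {1,...,9} with p < q, we have P(p,n) ≥ P(q,n), where P(d,n) = (1/n)·Σ_{i=1}^{n} c_d(i)/i and c_d(i) counts integers in {1,...,i} with decimal leading digit d. -/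
/-! Subtracting `(q - p) * 10 ^ k` from a `(k + 1)`-digit number with leading digit `q` yields a
`(k + 1)`-digit number with leading digit `p`. Since the number of digits is preserved, this map is
injective, so `c_q(i) ≤ c_p(i)` for every `i`, and averaging gives `P(q, n) ≤ P(p, n)`. -/

open Finset

@[simp]
lemma leadingDigit_zero : leadingDigit 0 = 0 := rfl

lemma leadingDigit_lt_ten (j : ℕ) : leadingDigit j < 10 :=
  Nat.div_lt_of_lt_mul (by simpa [pow_succ, mul_comm] using Nat.lt_pow_succ_log_self (by norm_num) j)

lemma mul_pow_log_le_of_leadingDigit_eq {j d : ℕ} (h : leadingDigit j = d) :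
    d * 10 ^ Nat.log 10 j ≤ j ∧ j < (d + 1) * 10 ^ Nat.log 10 j := by
  subst h
  refine ⟨Nat.div_mul_le_self _ _, ?_⟩
  rw [mul_comm]
  exact Nat.lt_mul_div_succ j (by positivity)

lemma log_eq_and_leadingDigit_eq {j d k : ℕ} (hd : 1 ≤ d) (hd10 : d < 10)
    (hlo : d * 10 ^ k ≤ j) (hhi : j < (d + 1) * 10 ^ k) :
    Nat.log 10 j = k ∧ leadingDigit j = d := by
  have hlog : Nat.log 10 j = k := by
    apply Nat.log_eq_of_pow_le_of_lt_pow
    · exact le_trans (Nat.le_mul_of_pos_left _ hd) hlo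
    · calc j < (d + 1) * 10 ^ k := hhi
        _ ≤ 10 * 10 ^ k := Nat.mul_le_mul_right _ hd10
        _ = 10 ^ (k + 1) := (pow_succ' 10 k).symm
  refine ⟨hlog, ?_⟩
  rw [leadingDigit, hlog]
  exact Nat.div_eq_of_lt_le hlo hhi

def shiftLeadingDigit (p q j : ℕ) : ℕ := j - (q - p) * 10 ^ Nat.log 10 j

lemma log_and_leadingDigit_shiftLeadingDigit {p q j : ℕ} (hp : 1 ≤ p) (hpq : p ≤ q)
    (hj : leadingDigit j = q) :
    Nat.log 10 (shiftLeadingDigit p q j) = Nat.log 10 j ∧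
      leadingDigit (shiftLeadingDigit p q j) = p := by
  obtain ⟨hlo, hhi⟩ := mul_pow_log_le_of_leadingDigit_eq hj
  have hq10 : q < 10 := hj ▸ leadingDigit_lt_ten j
  have hsplit : (q - p) * 10 ^ Nat.log 10 j + p * 10 ^ Nat.log 10 j = q * 10 ^ Nat.log 10 j := by
    rw [← Nat.add_mul, Nat.sub_add_cancel hpq]
  apply log_eq_and_leadingDigit_eq hp (by omega)
  · unfold shiftLeadingDigit; omega
  · unfold shiftLeadingDigit
    rw [Nat.add_mul] at hhi ⊢
    omega

lemma shiftLeadingDigit_pos {p q j : ℕ} (hp : 1 ≤ p) (hpq : p ≤ q) (hj : leadingDigit j = q) :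
    0 < shiftLeadingDigit p q j := by
  have hld := (log_and_leadingDigit_shiftLeadingDigit hp hpq hj).2
  refine Nat.pos_of_ne_zero fun h0 => ?_
  rw [h0, leadingDigit_zero] at hld
  omega

lemma shiftLeadingDigit_injOn {p q : ℕ} (hp : 1 ≤ p) (hpq : p ≤ q) :
    Set.InjOn (shiftLeadingDigit p q) {j | leadingDigit j = q} := by
  intro a ha b hb hab
  have hlog : Nat.log 10 a = Nat.log 10 b := by
    rw [← (log_and_leadingDigit_shiftLeadingDigit hp hpq ha).1,
      ← (log_and_leadingDigit_shiftLeadingDigit hp hpq hb).1, hab]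
  have ha0 := shiftLeadingDigit_pos hp hpq ha
  have hb0 := shiftLeadingDigit_pos hp hpq hb
  unfold shiftLeadingDigit at hab ha0 hb0
  rw [hlog] at hab ha0
  omega

lemma ldCount_anti {p q : ℕ} (hp : 1 ≤ p) (hpq : p ≤ q) (i : ℕ) : ldCount q i ≤ ldCount p i := by
  apply Finset.card_le_card_of_injOn (shiftLeadingDigit p q)
  · intro j hj
    simp only [Finset.coe_filter, Finset.mem_Icc, Set.mem_ofPred_eq] at hj ⊢
    exact ⟨⟨shiftLeadingDigit_pos hp hpq hj.2, (Nat.sub_le _ _).trans hj.1.2⟩,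
      (log_and_leadingDigit_shiftLeadingDigit hp hpq hj.2).2⟩
  · exact (shiftLeadingDigit_injOn hp hpq).mono fun j hj => (Finset.mem_filter.mp hj).2

theorem P_anti_general (n p q : ℕ) (hp : p ∈ Finset.Icc 1 9) (hpq : p < q) : P p n ≥ P q n := by
  unfold P
  gcongr
  exact ldCount_anti (Finset.mem_Icc.mp hp).1 hpq.le _

theorem P_anti (n p q : ℕ) (hn : 1 ≤ n) (hp : p ∈ Finset.Icc 1 9)
    (hq : q ∈ Finset.Icc 1 9) (hpq : p < q) : P p n ≥ P q n :=
  P_anti_general n p q hp hpq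
end
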